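/- arXiv:math/0409018 — 2 statements merged into one kernel-verified Lean document; each statement's English description precedes it below -/
import Mathlib

section
/- Let f, g : ℝ² → ℝ be measurable. Then for all s, t > 0 one has (f+g)**(s,t) ≤ 4 (f**(s,t) + g**(s,t)). -/
open MeasureTheory ENNReal Set

noncomputable section

/-- Decreasing rearrangement of an `ℝ≥0∞`-valued function on `ℝ` (w.r.t. Lebesgue measure):
`h*(t) = inf {σ : |{x : σ < h x}| ≤ t}`. -/
def rearrE (h : ℝ → ℝ≥0∞) (t : ℝ) : ℝ≥0∞ :=
  sInf {σ : ℝ≥0∞ | volume {x : ℝ | σ < h x} ≤ ENNReal.ofReal t}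

/-- Decreasing rearrangement of a real-valued function on `ℝ`. -/
def rearr (h : ℝ → ℝ) (t : ℝ) : ℝ≥0∞ :=
  rearrE (fun x => ENNReal.ofReal |h x|) t

/-- `f*_y(x,t)`: rearrangement in the second variable. -/
def rearrY (f : ℝ × ℝ → ℝ) (x t : ℝ) : ℝ≥0∞ := rearr (fun y => f (x, y)) t

/-- `f*_x(s,y)`: rearrangement in the first variable. -/
def rearrX (f : ℝ × ℝ → ℝ) (s y : ℝ) : ℝ≥0∞ := rearr (fun x => f (x, y)) s

/-- The multivariate rearrangement `f*_{yx}(s,t) = (x ↦ f*_y(x,t))*(s)`. -/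
def rearrYX (f : ℝ × ℝ → ℝ) (s t : ℝ) : ℝ≥0∞ := rearrE (fun x => rearrY f x t) s

/-- `f**_{yx}(s,t) = (1/s)∫_0^s (x ↦ (1/t)∫_0^t f*_y(x,τ) dτ)*(σ) dσ`. -/
def starstarYX (f : ℝ × ℝ → ℝ) (s t : ℝ) : ℝ≥0∞ :=
  (ENNReal.ofReal s)⁻¹ *
    ∫⁻ σ in Ioo (0:ℝ) s,
      rearrE (fun x => (ENNReal.ofReal t)⁻¹ * ∫⁻ τ in Ioo (0:ℝ) t, rearrY f x τ) σ

/-- `f**(s,t) = (1/(st))∫_0^s∫_0^t f*_{yx}(σ,τ) dσ dτ`. -/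
def starstar (f : ℝ × ℝ → ℝ) (s t : ℝ) : ℝ≥0∞ :=
  (ENNReal.ofReal (s * t))⁻¹ * ∫⁻ σ in Ioo (0:ℝ) s, ∫⁻ τ in Ioo (0:ℝ) t, rearrYX f σ τ

/-- Decreasing rearrangement of `f : ℝ² → ℝ` w.r.t. two-dimensional Lebesgue measure. -/
def rearr2 (f : ℝ × ℝ → ℝ) (θ : ℝ) : ℝ≥0∞ :=
  sInf {σ : ℝ≥0∞ | volume {z : ℝ × ℝ | σ < ENNReal.ofReal |f z|} ≤ ENNReal.ofReal θ}

/-- A weight on `ℝ₊`: nonnegative and locally integrable. -/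
def IsWeight (u : ℝ → ℝ) : Prop :=
  (∀ x, 0 ≤ u x) ∧ LocallyIntegrableOn u (Ioi 0)

/-- A weight on `ℝ²₊`: nonnegative and locally integrable. -/
def IsWeight2 (w : ℝ × ℝ → ℝ) : Prop :=
  (∀ z, 0 ≤ w z) ∧ LocallyIntegrableOn w (Ioi 0 ×ˢ Ioi 0)

/-- `‖g‖_{Λ^p(u)}` for `g : ℝ → ℝ`. -/
def lamNorm (p : ℝ) (u : ℝ → ℝ) (g : ℝ → ℝ) : ℝ≥0∞ :=
  (∫⁻ t in Ioi (0:ℝ), (rearr g t) ^ p * ENNReal.ofReal (u t)) ^ (1 / p)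

/-- `‖f‖_{Λ₂^p(w)}` for `f : ℝ² → ℝ` and a weight `w` on `ℝ²₊`. -/
def lam2Norm (p : ℝ) (w : ℝ × ℝ → ℝ) (f : ℝ × ℝ → ℝ) : ℝ≥0∞ :=
  (∫⁻ s in Ioi (0:ℝ), ∫⁻ t in Ioi (0:ℝ),
      (rearrYX f s t) ^ p * ENNReal.ofReal (w (s, t))) ^ (1 / p)

/-- `‖f‖_{Λ^p(ℝ²,u)}`, by means of the 2D rearrangement. -/
def lamR2Norm (p : ℝ) (u : ℝ → ℝ) (f : ℝ × ℝ → ℝ) : ℝ≥0∞ :=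
  (∫⁻ θ in Ioi (0:ℝ), (rearr2 f θ) ^ p * ENNReal.ofReal (u θ)) ^ (1 / p)

/-- The mixed Lorentz quasinorm `‖f‖_{Λ^p(u)[Λ^p(v)]}`. -/
def mixedNorm (p : ℝ) (u v : ℝ → ℝ) (f : ℝ × ℝ → ℝ) : ℝ≥0∞ :=
  (∫⁻ s in Ioi (0:ℝ),
      rearrE (fun x => ∫⁻ t in Ioi (0:ℝ), (rearrY f x t) ^ p * ENNReal.ofReal (v t)) s *
        ENNReal.ofReal (u s)) ^ (1 / p)

/-- The mixed Lorentz quasinorm with the order of the variables reversed,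
`‖f‖_{Λ^p(v)[Λ^p(u)]}`. -/
def mixedNormRev (p : ℝ) (v u : ℝ → ℝ) (f : ℝ × ℝ → ℝ) : ℝ≥0∞ :=
  (∫⁻ t in Ioi (0:ℝ),
      rearrE (fun y => ∫⁻ s in Ioi (0:ℝ), (rearrX f s y) ^ p * ENNReal.ofReal (u s)) t *
        ENNReal.ofReal (v t)) ^ (1 / p)

/-- The `B_p` condition for a weight on `ℝ₊`. -/
def Bp (p : ℝ) (v : ℝ → ℝ) : Prop :=
  ∃ C : ℝ, 0 < C ∧ ∀ r : ℝ, 0 < r →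
    ENNReal.ofReal (r ^ p) * ∫⁻ x in Ioi r, ENNReal.ofReal (v x / x ^ p) ≤
      ENNReal.ofReal C * ∫⁻ x in Ioo (0:ℝ) r, ENNReal.ofReal (v x)

/-- Two-dimensional Hardy operator acting on `ℝ≥0∞`-valued functions. -/
def S2E (g : ℝ × ℝ → ℝ≥0∞) (s t : ℝ) : ℝ≥0∞ :=
  (ENNReal.ofReal (s * t))⁻¹ * ∫⁻ σ in Ioo (0:ℝ) s, ∫⁻ τ in Ioo (0:ℝ) t, g (σ, τ)

/-- Nonincreasing in each variable on `ℝ²₊`. -/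
def BiAntitone (g : ℝ × ℝ → ℝ≥0∞) : Prop :=
  ∀ s s' t t' : ℝ, 0 < s' → s' ≤ s → 0 < t' → t' ≤ t → g (s, t) ≤ g (s', t')

/-- The class `B_p^{(2)}`: the two-dimensional Hardy operator is bounded on the cone of
nonnegative functions nonincreasing in each variable in `L^p(ℝ²₊, w)`. -/
def Bp2 (p : ℝ) (w : ℝ × ℝ → ℝ) : Prop :=
  ∃ C : ℝ, 0 < C ∧ ∀ g : ℝ × ℝ → ℝ≥0∞, Measurable g → BiAntitone g →
    (∫⁻ s in Ioi (0:ℝ), ∫⁻ t in Ioi (0:ℝ), (S2E g s t) ^ p * ENNReal.ofReal (w (s, t))) ≤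
      ENNReal.ofReal C *
        ∫⁻ s in Ioi (0:ℝ), ∫⁻ t in Ioi (0:ℝ), (g (s, t)) ^ p * ENNReal.ofReal (w (s, t))

/-- A decreasing subset of `ℝ²₊`. -/
def DecreasingSet (D : Set (ℝ × ℝ)) : Prop :=
  MeasurableSet D ∧ D ⊆ Ioi 0 ×ˢ Ioi 0 ∧
    ∀ s t s' t' : ℝ, (s, t) ∈ D → 0 < s' → s' ≤ s → 0 < t' → t' ≤ t → (s', t') ∈ D

/-- `w(E) = ∫_E w`. -/
def wMeas (w : ℝ × ℝ → ℝ) (E : Set (ℝ × ℝ)) : ℝ≥0∞ := ∫⁻ z in E, ENNReal.ofReal (w z)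

/-- `U(m) = ∫_0^m u(θ) dθ`, for `m ∈ [0,∞]`. -/
def Uof (u : ℝ → ℝ) (m : ℝ≥0∞) : ℝ≥0∞ :=
  ∫⁻ θ in {θ : ℝ | 0 < θ ∧ ENNReal.ofReal θ < m}, ENNReal.ofReal (u θ)

/-- A covering family of `ℝ²₊`: an increasing sequence of decreasing sets covering `ℝ²₊`. -/
def CoveringFamily (D : ℕ → Set (ℝ × ℝ)) : Prop :=
  (∀ k, DecreasingSet (D k)) ∧ Monotone D ∧ (⋃ k, D k) = Ioi 0 ×ˢ Ioi 0

end

/-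
The rearrangement `f*_{yx}` is subadditive with split arguments,
`(f+g)*_{yx}(s₁+s₂, t₁+t₂) ≤ f*_{yx}(s₁,t₁) + g*_{yx}(s₂,t₂)`: for the one-dimensional
rearrangement this is the union bound `|{h₁+h₂ > σ₁+σ₂}| ≤ |{h₁ > σ₁}| + |{h₂ > σ₂}|`, and
`f*_{yx}` is built from two such rearrangements, both monotone in the function. Taking all four
arguments to be halves bounds `(f+g)*_{yx}(σ,τ)` by `f*_{yx}(σ/2,τ/2) + g*_{yx}(σ/2,τ/2)`;
substituting `σ/2, τ/2` in the integral over `(0,s)×(0,t)` costs the factor `2·2` and shrinks the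
domain to `(0,s/2)×(0,t/2)`, which only lowers the integral of a nonnegative function.
-/

theorem monotone_rearrE : Monotone rearrE := fun _ _ hh _ =>
  sInf_le_sInf fun _ hσ => (measure_mono fun x hx => hx.trans_le (hh x)).trans hσ

theorem antitone_rearrE (h : ℝ → ℝ≥0∞) : Antitone (rearrE h) := fun _ _ htt' =>
  sInf_le_sInf fun _ hσ => hσ.trans (ENNReal.ofReal_le_ofReal htt')

theorem rearrE_add_le (h₁ h₂ : ℝ → ℝ≥0∞) {t₁ t₂ : ℝ} (ht₁ : 0 ≤ t₁) (ht₂ : 0 ≤ t₂) :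
    rearrE (h₁ + h₂) (t₁ + t₂) ≤ rearrE h₁ t₁ + rearrE h₂ t₂ := by
  unfold rearrE
  rw [ENNReal.sInf_add]
  refine le_iInf₂ fun σ₁ hσ₁ => ?_
  rw [ENNReal.add_sInf]
  refine le_iInf₂ fun σ₂ hσ₂ => sInf_le ?_
  have hsub : {x | σ₁ + σ₂ < (h₁ + h₂) x} ⊆ {x | σ₁ < h₁ x} ∪ {x | σ₂ < h₂ x} := by
    intro x hx
    by_contra hc
    simp only [mem_union, mem_ofPred_eq, not_or, not_lt] at hc
    exact (add_le_add hc.1 hc.2).not_gt hx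
  calc volume {x | σ₁ + σ₂ < (h₁ + h₂) x}
      ≤ volume {x | σ₁ < h₁ x} + volume {x | σ₂ < h₂ x} :=
        (measure_mono hsub).trans (measure_union_le _ _)
    _ ≤ ENNReal.ofReal t₁ + ENNReal.ofReal t₂ := add_le_add hσ₁ hσ₂
    _ = ENNReal.ofReal (t₁ + t₂) := (ENNReal.ofReal_add ht₁ ht₂).symm

theorem rearr_add_le (a b : ℝ → ℝ) {t₁ t₂ : ℝ} (ht₁ : 0 ≤ t₁) (ht₂ : 0 ≤ t₂) :
    rearr (a + b) (t₁ + t₂) ≤ rearr a t₁ + rearr b t₂ := by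
  refine (monotone_rearrE (fun y => ?_) _).trans (rearrE_add_le _ _ ht₁ ht₂)
  calc ENNReal.ofReal |a y + b y| ≤ ENNReal.ofReal (|a y| + |b y|) :=
        ENNReal.ofReal_le_ofReal (abs_add_le _ _)
    _ = ENNReal.ofReal |a y| + ENNReal.ofReal |b y| :=
        ENNReal.ofReal_add (abs_nonneg _) (abs_nonneg _)

theorem rearrYX_add_le (f g : ℝ × ℝ → ℝ) {s₁ s₂ t₁ t₂ : ℝ} (hs₁ : 0 ≤ s₁) (hs₂ : 0 ≤ s₂)
    (ht₁ : 0 ≤ t₁) (ht₂ : 0 ≤ t₂) :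
    rearrYX (f + g) (s₁ + s₂) (t₁ + t₂) ≤ rearrYX f s₁ t₁ + rearrYX g s₂ t₂ :=
  (monotone_rearrE (fun _ => rearr_add_le _ _ ht₁ ht₂) _).trans (rearrE_add_le _ _ hs₁ hs₂)

theorem antitone_rearrYX_left (f : ℝ × ℝ → ℝ) (t : ℝ) : Antitone (rearrYX f · t) :=
  fun _ _ h => antitone_rearrE _ h

theorem antitone_rearrYX_right (f : ℝ × ℝ → ℝ) (s : ℝ) : Antitone (rearrYX f s) :=
  fun _ _ h => monotone_rearrE (fun _ => antitone_rearrE _ h) s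

theorem setLIntegral_Ioo_comp_div (F : ℝ → ℝ≥0∞) {c : ℝ} (hc : 0 < c) (s : ℝ) :
    ∫⁻ σ in Ioo 0 s, F (σ / c) = ENNReal.ofReal c * ∫⁻ σ in Ioo 0 (s / c), F σ := by
  have he : MeasurableEmbedding (c⁻¹ * · : ℝ → ℝ) := measurableEmbedding_mulLeft₀ (by positivity)
  have hpre : (c⁻¹ * · : ℝ → ℝ) ⁻¹' Ioo 0 (s / c) = Ioo 0 s := by
    ext σ
    simp only [mem_preimage, mem_Ioo, ← div_eq_inv_mul, div_pos_iff_of_pos_right hc,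
      div_lt_div_iff_of_pos_right hc]
  calc ∫⁻ σ in Ioo 0 s, F (σ / c)
      = ∫⁻ σ in (c⁻¹ * ·) ⁻¹' Ioo 0 (s / c), F (c⁻¹ * σ) := by
        rw [hpre]
        simp only [div_eq_inv_mul]
    _ = ∫⁻ σ, F σ ∂(volume.map (c⁻¹ * ·)).restrict (Ioo 0 (s / c)) := by
        rw [he.restrict_map, he.lintegral_map]
    _ = ENNReal.ofReal c * ∫⁻ σ in Ioo 0 (s / c), F σ := by
        rw [Real.map_volume_mul_left (inv_ne_zero hc.ne'), inv_inv, abs_of_pos hc,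
          Measure.restrict_smul, lintegral_smul_measure, smul_eq_mul]

theorem setLIntegral_Ioo_comp_div_le (F : ℝ → ℝ≥0∞) {c s : ℝ} (hc : 1 ≤ c) (hs : 0 ≤ s) :
    ∫⁻ σ in Ioo 0 s, F (σ / c) ≤ ENNReal.ofReal c * ∫⁻ σ in Ioo 0 s, F σ := by
  rw [setLIntegral_Ioo_comp_div F (by linarith) s]
  exact mul_le_mul_right (lintegral_mono_set (Ioo_subset_Ioo_right (div_le_self hs hc))) _

theorem setLIntegral_Ioo_setLIntegral_Ioo_comp_div_le (F : ℝ → ℝ → ℝ≥0∞) {a b s t : ℝ}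
    (ha : 1 ≤ a) (hb : 1 ≤ b) (hs : 0 ≤ s) (ht : 0 ≤ t) :
    ∫⁻ σ in Ioo 0 s, ∫⁻ τ in Ioo 0 t, F (σ / a) (τ / b) ≤
      ENNReal.ofReal a * ENNReal.ofReal b * ∫⁻ σ in Ioo 0 s, ∫⁻ τ in Ioo 0 t, F σ τ := by
  calc ∫⁻ σ in Ioo 0 s, ∫⁻ τ in Ioo 0 t, F (σ / a) (τ / b)
      ≤ ∫⁻ σ in Ioo 0 s, ENNReal.ofReal b * ∫⁻ τ in Ioo 0 t, F (σ / a) τ :=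
        lintegral_mono fun σ => setLIntegral_Ioo_comp_div_le _ hb ht
    _ = ENNReal.ofReal b * ∫⁻ σ in Ioo 0 s, ∫⁻ τ in Ioo 0 t, F (σ / a) τ :=
        lintegral_const_mul' _ _ ofReal_ne_top
    _ ≤ ENNReal.ofReal b * (ENNReal.ofReal a * ∫⁻ σ in Ioo 0 s, ∫⁻ τ in Ioo 0 t, F σ τ) := by
        gcongr
        exact setLIntegral_Ioo_comp_div_le (fun σ => ∫⁻ τ in Ioo 0 t, F σ τ) ha hs
    _ = _ := by ring

theorem setLIntegral_Ioo_setLIntegral_Ioo_rearrYX_add (f g : ℝ × ℝ → ℝ) (s t : ℝ) :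
    ∫⁻ σ in Ioo 0 s, ∫⁻ τ in Ioo 0 t, (rearrYX f σ τ + rearrYX g σ τ) =
      (∫⁻ σ in Ioo 0 s, ∫⁻ τ in Ioo 0 t, rearrYX f σ τ) +
        ∫⁻ σ in Ioo 0 s, ∫⁻ τ in Ioo 0 t, rearrYX g σ τ := by
  have houter : Antitone fun σ => ∫⁻ τ in Ioo 0 t, rearrYX f σ τ := fun _ _ h =>
    lintegral_mono fun τ => antitone_rearrYX_left f τ h
  simp_rw [lintegral_add_left (antitone_rearrYX_right f _).measurable]
  exact lintegral_add_left houter.measurable _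

theorem rearrYX_add_le_half (f g : ℝ × ℝ → ℝ) {s t : ℝ} (hs : 0 ≤ s) (ht : 0 ≤ t) :
    rearrYX (f + g) s t ≤ rearrYX f (s / 2) (t / 2) + rearrYX g (s / 2) (t / 2) := by
  have hs₂ : 0 ≤ s / 2 := by positivity
  have ht₂ : 0 ≤ t / 2 := by positivity
  have h := rearrYX_add_le f g hs₂ hs₂ ht₂ ht₂
  rwa [add_halves, add_halves] at h

theorem setLIntegral_Ioo_setLIntegral_Ioo_rearrYX_add_le (f g : ℝ × ℝ → ℝ) {s t : ℝ}
    (hs : 0 ≤ s) (ht : 0 ≤ t) :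
    ∫⁻ σ in Ioo 0 s, ∫⁻ τ in Ioo 0 t, rearrYX (f + g) σ τ ≤
      4 * ((∫⁻ σ in Ioo 0 s, ∫⁻ τ in Ioo 0 t, rearrYX f σ τ) +
        ∫⁻ σ in Ioo 0 s, ∫⁻ τ in Ioo 0 t, rearrYX g σ τ) := by
  calc _ ≤ ∫⁻ σ in Ioo 0 s, ∫⁻ τ in Ioo 0 t,
        (rearrYX f (σ / 2) (τ / 2) + rearrYX g (σ / 2) (τ / 2)) :=
        setLIntegral_mono' measurableSet_Ioo fun σ hσ => setLIntegral_mono' measurableSet_Ioo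
          fun τ hτ => rearrYX_add_le_half f g hσ.1.le hτ.1.le
    _ ≤ ENNReal.ofReal 2 * ENNReal.ofReal 2 *
        ∫⁻ σ in Ioo 0 s, ∫⁻ τ in Ioo 0 t, (rearrYX f σ τ + rearrYX g σ τ) :=
        setLIntegral_Ioo_setLIntegral_Ioo_comp_div_le (fun σ τ => rearrYX f σ τ + rearrYX g σ τ)
          one_le_two one_le_two hs ht
    _ = _ := by
        rw [setLIntegral_Ioo_setLIntegral_Ioo_rearrYX_add, ENNReal.ofReal_ofNat]
        norm_num

theorem starstar_quasi_subadditive_general (f g : ℝ × ℝ → ℝ) :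
    ∀ s t : ℝ, 0 < s → 0 < t →
      starstar (f + g) s t ≤ 4 * (starstar f s t + starstar g s t) := by
  intro s t hs ht
  calc starstar (f + g) s t
      ≤ (ENNReal.ofReal (s * t))⁻¹ * (4 * ((∫⁻ σ in Ioo 0 s, ∫⁻ τ in Ioo 0 t, rearrYX f σ τ) +
          ∫⁻ σ in Ioo 0 s, ∫⁻ τ in Ioo 0 t, rearrYX g σ τ)) :=
        mul_le_mul_right (setLIntegral_Ioo_setLIntegral_Ioo_rearrYX_add_le f g hs.le ht.le) _
    _ = 4 * (starstar f s t + starstar g s t) := by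
        simp only [starstar]
        ring

/-- `(f+g)**(s,t) ≤ 4 (f**(s,t) + g**(s,t))`. -/
theorem starstar_quasi_subadditive (f g : ℝ × ℝ → ℝ) (hf : Measurable f) (hg : Measurable g) :
    ∀ s t : ℝ, 0 < s → 0 < t →
      starstar (f + g) s t ≤ 4 * (starstar f s t + starstar g s t) :=
  starstar_quasi_subadditive_general f g
end

section
/- Let 0 < p < ∞, u = χ_{[0,1]} and v ≡ 1. Then there exists a measurable function f : ℝ² → ℝ (namely f = Σ_{k≥0} (k+1)^{-1/p} χ_{[k,k+1]×[k,k+1]}) such that ‖f‖_{Λ₂^p(uv)} = 1 while ‖f‖_{Λ^p(v)[Λ^p(u)]} = ∞. In particular, Λ₂^p(uv) is not contained in Λ^p(v)[Λ^p(u)]. -/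
open MeasureTheory ENNReal Set

/-!
Take `f = ∑ₖ cₖ χ_{[k,k+1)²}` with `cₖ = (k+1)^{-1/p}`. Every section of `f` is a constant
times the indicator of a unit interval, so `f*_y(x,t) = c_{⌊x⌋} χ_{t<1}` and
`f*_{yx}(s,t) = c_{⌊s⌋} χ_{t<1}`: against the weight `χ_{[0,1]}(s)` only the block `k = 0` is
seen, and `‖f‖_{Λ₂^p(uv)} = c₀ = 1`. In the reversed order the inner `Λ^p(u)` quasinorm of the
row at height `y` is `c_{⌊y⌋}^p = 1/(⌊y⌋+1)`, so the outer integral is the harmonic series.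
-/

open scoped NNReal

theorem rearrE_zero (t : ℝ) : rearrE (fun _ => 0) t = 0 :=
  nonpos_iff_eq_zero.mp <| sInf_le <| by simp

theorem rearrE_indicator_const (a : ℝ≥0∞) (S : Set ℝ) (t : ℝ) :
    rearrE (S.indicator fun _ => a) t = if ENNReal.ofReal t < volume S then a else 0 := by
  have level_set : ∀ σ, {x | σ < S.indicator (fun _ => a) x} = if σ < a then S else ∅ := by
    intro σ
    ext x
    by_cases hx : x ∈ S <;> split_ifs <;> simp [*]
  split_ifs with ht
  · refine le_antisymm (sInf_le ?_) (le_sInf fun σ hσ => ?_)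
    · simp [level_set]
    · by_contra! hσa
      simp only [mem_ofPred_eq, level_set, if_pos hσa] at hσ
      exact hσ.not_gt ht
  · refine nonpos_iff_eq_zero.mp (sInf_le ?_)
    simp only [mem_ofPred_eq, level_set]
    split_ifs
    · exact not_lt.mp ht
    · simp

noncomputable def natFloorStep (c : ℕ → ℝ≥0∞) : ℝ → ℝ≥0∞ := (Ici 0).indicator fun x => c ⌊x⌋₊

theorem rearrE_natFloorStep {c : ℕ → ℝ≥0∞} (hc : Antitone c) {s : ℝ} (hs : 0 ≤ s) :
    rearrE (natFloorStep c) s = c ⌊s⌋₊ := by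
  refine le_antisymm (sInf_le ?_) (le_sInf fun σ hσ => ?_)
  · have : {x | c ⌊s⌋₊ < natFloorStep c x} ⊆ Ico 0 ⌊s⌋₊ := by
      intro x hx
      by_cases hx0 : 0 ≤ x
      · simp only [mem_ofPred_eq, natFloorStep, indicator_of_mem (mem_Ici.mpr hx0)] at hx
        exact ⟨hx0, (Nat.floor_lt hx0).mp (lt_of_not_ge fun h => (hc h).not_gt hx)⟩
      · simp [natFloorStep, hx0] at hx
    calc volume _ ≤ volume (Ico (0:ℝ) ⌊s⌋₊) := measure_mono this
      _ ≤ ENNReal.ofReal s := by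
        rw [Real.volume_Ico, sub_zero]
        exact ENNReal.ofReal_le_ofReal (Nat.floor_le hs)
  · by_contra! hσ_lt
    have : Ico (0:ℝ) (⌊s⌋₊ + 1) ⊆ {x | σ < natFloorStep c x} := fun x hx => by
      simp only [mem_ofPred_eq, natFloorStep, indicator_of_mem (mem_Ici.mpr hx.1)]
      exact hσ_lt.trans_le
        (hc (Nat.le_of_lt_succ ((Nat.floor_lt hx.1).mpr (by exact_mod_cast hx.2))))
    have := (measure_mono this).trans hσ
    rw [Real.volume_Ico, sub_zero, ENNReal.ofReal_le_ofReal_iff hs] at this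
    exact (Nat.lt_floor_add_one s).not_ge this

theorem rearrX_eq_rearrY_of_swap {f : ℝ × ℝ → ℝ} (hf : ∀ x y, f (x, y) = f (y, x)) (s y : ℝ) :
    rearrX f s y = rearrY f y s := by
  simp only [rearrX, rearrY, hf]

theorem mem_Ico_natCast_iff {n : ℕ} {y : ℝ} : y ∈ Ico (n : ℝ) (n + 1) ↔ 0 ≤ y ∧ ⌊y⌋₊ = n := by
  constructor
  · intro hy
    have hy0 : 0 ≤ y := (Nat.cast_nonneg n).trans hy.1
    exact ⟨hy0, (Nat.floor_eq_iff hy0).mpr hy⟩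
  · rintro ⟨hy0, rfl⟩
    exact (Nat.floor_eq_iff hy0).mp rfl

theorem lintegral_Ioi_natFloor (g : ℕ → ℝ≥0∞) :
    ∫⁻ t in Ioi (0:ℝ), g ⌊t⌋₊ = ∑' k, g k := by
  have cover : Ici (0:ℝ) = ⋃ k : ℕ, Ico (k : ℝ) (k + 1) := by
    ext y
    simp only [mem_Ici, mem_iUnion, mem_Ico_natCast_iff, exists_and_left, exists_eq', and_true]
  have disjoint : Pairwise (Function.onFun Disjoint fun k : ℕ => Ico (k : ℝ) (k + 1)) :=
    fun m n hmn => disjoint_left.mpr fun y hm hn =>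
      hmn ((mem_Ico_natCast_iff.mp hm).2.symm.trans (mem_Ico_natCast_iff.mp hn).2)
  rw [restrict_Ioi_eq_restrict_Ici, cover, lintegral_iUnion (fun _ => measurableSet_Ico) disjoint]
  refine tsum_congr fun k => ?_
  rw [setLIntegral_congr_fun measurableSet_Ico fun y hy => by rw [(mem_Ico_natCast_iff.mp hy).2],
    setLIntegral_const, Real.volume_Ico, add_sub_cancel_left, ENNReal.ofReal_one, mul_one]

theorem lintegral_Ioi_ite_lt_one (A : ℝ≥0∞) :
    ∫⁻ t in Ioi (0:ℝ), (if t < 1 then A else 0) = A := by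
  have : (fun t : ℝ => if t < 1 then A else 0) = (Iio 1).indicator fun _ => A := by
    ext t; simp [indicator_apply]
  rw [this, lintegral_indicator_const measurableSet_Iio, Measure.restrict_apply measurableSet_Iio,
    Iio_inter_Ioi, Real.volume_Ioo, sub_zero, ENNReal.ofReal_one, mul_one]

theorem tsum_coe_inv_natCast_add_one :
    ∑' k : ℕ, ((((k : ℝ≥0) + 1)⁻¹ : ℝ≥0) : ℝ≥0∞) = ⊤ := by
  rw [← not_ne_iff, ENNReal.tsum_coe_ne_top_iff_summable, ← NNReal.summable_coe]
  push_cast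
  exact_mod_cast mt (summable_nat_add_iff 1).mp Real.not_summable_natCast_inv

noncomputable def diagBlocks (c : ℕ → ℝ≥0) (z : ℝ × ℝ) : ℝ :=
  if 0 ≤ z.1 ∧ 0 ≤ z.2 ∧ ⌊z.1⌋₊ = ⌊z.2⌋₊ then c ⌊z.1⌋₊ else 0

section diagBlocks

variable (c : ℕ → ℝ≥0)

theorem measurable_diagBlocks : Measurable (diagBlocks c) := by
  unfold diagBlocks
  refine Measurable.ite ?_ ?_ measurable_const
  · exact (measurableSet_le measurable_const measurable_fst).inter
      ((measurableSet_le measurable_const measurable_snd).inter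
        (measurableSet_eq_fun (Nat.measurable_floor.comp measurable_fst)
          (Nat.measurable_floor.comp measurable_snd)))
  · exact (measurable_from_top (f := fun n : ℕ => (c n : ℝ))).comp
      (Nat.measurable_floor.comp measurable_fst)

theorem diagBlocks_swap (x y : ℝ) : diagBlocks c (x, y) = diagBlocks c (y, x) := by
  unfold diagBlocks
  by_cases h : 0 ≤ x ∧ 0 ≤ y ∧ ⌊x⌋₊ = ⌊y⌋₊
  · rw [if_pos h, if_pos ⟨h.2.1, h.1, h.2.2.symm⟩, h.2.2]
  · rw [if_neg h, if_neg fun h' => h ⟨h'.2.1, h'.1, h'.2.2.symm⟩]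

theorem ofReal_abs_diagBlocks (x : ℝ) :
    (fun y => ENNReal.ofReal |diagBlocks c (x, y)|) =
      (Ico (⌊x⌋₊ : ℝ) (⌊x⌋₊ + 1)).indicator fun _ => natFloorStep (fun n => c n) x := by
  ext y
  by_cases hx : 0 ≤ x
  · simp only [diagBlocks, natFloorStep, indicator_of_mem (mem_Ici.mpr hx), indicator_apply,
      mem_Ico_natCast_iff, eq_comm (a := ⌊y⌋₊), hx, true_and]
    split_ifs <;> simp
  · simp [diagBlocks, natFloorStep, hx]

theorem rearrY_diagBlocks (x t : ℝ) :
    rearrY (diagBlocks c) x t = if t < 1 then natFloorStep (fun n => c n) x else 0 := by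
  rw [rearrY, rearr, ofReal_abs_diagBlocks, rearrE_indicator_const, Real.volume_Ico,
    add_sub_cancel_left, ENNReal.ofReal_one]
  simp only [ENNReal.ofReal_lt_one]

theorem rearrX_diagBlocks (s y : ℝ) :
    rearrX (diagBlocks c) s y = if s < 1 then natFloorStep (fun n => c n) y else 0 := by
  rw [rearrX_eq_rearrY_of_swap (diagBlocks_swap c), rearrY_diagBlocks]

variable {c}

theorem rearrYX_diagBlocks (hc : Antitone c) {s : ℝ} (hs : 0 ≤ s) (t : ℝ) :
    rearrYX (diagBlocks c) s t = if t < 1 then (c ⌊s⌋₊ : ℝ≥0∞) else 0 := by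
  simp only [rearrYX, rearrY_diagBlocks]
  split_ifs
  · exact rearrE_natFloorStep (fun m n hmn => ENNReal.coe_le_coe.mpr (hc hmn)) hs
  · exact rearrE_zero s

variable {p : ℝ}

theorem lam2Norm_diagBlocks (hp : 0 < p) (hc : Antitone c) :
    lam2Norm p (fun z => (Icc (0:ℝ) 1).indicator (fun _ => (1:ℝ)) z.1 * 1) (diagBlocks c) =
      c 0 := by
  have inner : ∀ s ∈ Ioi (0:ℝ), ∫⁻ t in Ioi (0:ℝ), rearrYX (diagBlocks c) s t ^ p *
      ENNReal.ofReal ((Icc (0:ℝ) 1).indicator (fun _ => (1:ℝ)) s * 1) =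
      (Icc (0:ℝ) 1).indicator (fun s => (c ⌊s⌋₊ : ℝ≥0∞) ^ p) s := by
    intro s hs
    have integrand : ∀ t, rearrYX (diagBlocks c) s t ^ p *
        ENNReal.ofReal ((Icc (0:ℝ) 1).indicator (fun _ => (1:ℝ)) s * 1) =
        if t < 1 then (c ⌊s⌋₊ : ℝ≥0∞) ^ p *
          ENNReal.ofReal ((Icc (0:ℝ) 1).indicator (fun _ => (1:ℝ)) s * 1) else 0 := fun t => by
      rw [rearrYX_diagBlocks hc (le_of_lt hs)]
      split_ifs <;> simp [ENNReal.zero_rpow_of_pos hp]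
    simp_rw [integrand, lintegral_Ioi_ite_lt_one]
    by_cases hs1 : s ∈ Icc (0:ℝ) 1 <;> simp [hs1]
  have floor_eq_zero : ∀ s ∈ Ioo (0:ℝ) 1, (c ⌊s⌋₊ : ℝ≥0∞) ^ p = (c 0 : ℝ≥0∞) ^ p := fun s hs => by
    rw [Nat.floor_eq_zero.mpr hs.2]
  have Icc_inter_Ioi : Icc (0:ℝ) 1 ∩ Ioi 0 = Ioc 0 1 :=
    ext fun s => ⟨fun h => ⟨h.2, h.1.2⟩, fun h => ⟨⟨le_of_lt h.1, h.2⟩, h.1⟩⟩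
  rw [lam2Norm, setLIntegral_congr_fun measurableSet_Ioi inner,
    lintegral_indicator measurableSet_Icc, Measure.restrict_restrict measurableSet_Icc,
    Icc_inter_Ioi, Measure.restrict_congr_set Ioo_ae_eq_Ioc.symm,
    setLIntegral_congr_fun measurableSet_Ioo floor_eq_zero, setLIntegral_const, Real.volume_Ioo,
    sub_zero, ENNReal.ofReal_one, mul_one, one_div, ENNReal.rpow_rpow_inv hp.ne']

theorem mixedNormRev_diagBlocks (hp : 0 < p) (hc : Antitone c) :
    mixedNormRev p (fun _ => (1:ℝ)) ((Icc (0:ℝ) 1).indicator fun _ => (1:ℝ)) (diagBlocks c) =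
      (∑' k, (c k : ℝ≥0∞) ^ p) ^ (1 / p) := by
  have inner : (fun y => ∫⁻ s in Ioi (0:ℝ), rearrX (diagBlocks c) s y ^ p *
      ENNReal.ofReal ((Icc (0:ℝ) 1).indicator (fun _ => (1:ℝ)) s)) =
      natFloorStep fun n => (c n : ℝ≥0∞) ^ p := by
    ext y
    have integrand : ∀ s ∈ Ioi (0:ℝ), rearrX (diagBlocks c) s y ^ p *
        ENNReal.ofReal ((Icc (0:ℝ) 1).indicator (fun _ => (1:ℝ)) s) =
        if s < 1 then natFloorStep (fun n => (c n : ℝ≥0∞)) y ^ p else 0 := fun s hs => by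
      rw [rearrX_diagBlocks]
      split_ifs with hs1
      · simp [indicator_of_mem (mem_Icc.mpr ⟨le_of_lt hs, hs1.le⟩)]
      · simp [ENNReal.zero_rpow_of_pos hp]
    rw [setLIntegral_congr_fun measurableSet_Ioi integrand, lintegral_Ioi_ite_lt_one]
    by_cases hy : 0 ≤ y <;> simp [natFloorStep, hy, ENNReal.zero_rpow_of_pos hp]
  have hcp : Antitone fun n => (c n : ℝ≥0∞) ^ p := fun m n hmn =>
    ENNReal.rpow_le_rpow (ENNReal.coe_le_coe.mpr (hc hmn)) hp.le
  simp only [mixedNormRev, inner, ENNReal.ofReal_one, mul_one]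
  rw [setLIntegral_congr_fun measurableSet_Ioi fun t ht => rearrE_natFloorStep hcp (le_of_lt ht),
    lintegral_Ioi_natFloor fun n => (c n : ℝ≥0∞) ^ p]

end diagBlocks

/-- with `u = χ_{[0,1]}` and `v ≡ 1`, there is a measurable `f` with
`‖f‖_{Λ₂^p(uv)} = 1` and `‖f‖_{Λ^p(v)[Λ^p(u)]} = ∞`; in particular
`Λ₂^p(uv) ⊄ Λ^p(v)[Λ^p(u)]`. -/
theorem lam2_not_subset_mixedRev (p : ℝ) (hp : 0 < p) :
    ∃ f : ℝ × ℝ → ℝ, Measurable f ∧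
      lam2Norm p (fun z => (Icc (0:ℝ) 1).indicator (fun _ => (1:ℝ)) z.1 * 1) f = 1 ∧
      mixedNormRev p (fun _ => (1:ℝ)) ((Icc (0:ℝ) 1).indicator fun _ => (1:ℝ)) f = ⊤ := by
  set c : ℕ → ℝ≥0 := fun k => ((k : ℝ≥0) + 1) ^ (-p⁻¹)
  have hc : Antitone c := fun m n hmn =>
    NNReal.rpow_le_rpow_of_nonpos (by positivity) (by gcongr) (neg_nonpos.mpr (inv_pos.mpr hp).le)
  have hc_rpow : ∀ k, (c k : ℝ≥0∞) ^ p = ((((k : ℝ≥0) + 1)⁻¹ : ℝ≥0) : ℝ≥0∞) := fun k => by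
    rw [← ENNReal.coe_rpow_of_nonneg _ hp.le, ← NNReal.rpow_mul, neg_mul, inv_mul_cancel₀ hp.ne',
      NNReal.rpow_neg_one]
  refine ⟨diagBlocks c, measurable_diagBlocks c, ?_, ?_⟩
  · rw [lam2Norm_diagBlocks hp hc]
    simp [c]
  · rw [mixedNormRev_diagBlocks hp hc]
    simp_rw [hc_rpow, tsum_coe_inv_natCast_add_one]
    exact ENNReal.top_rpow_of_pos (one_div_pos.mpr hp)
end
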